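/- arXiv:2409.00596 — 2 statements merged into one kernel-verified Lean document; each statement's English description precedes it below -/
import Mathlib

section
/- Let C ⊆ Sⁿ be a set and P, Q points of Sⁿ. The hemisphere H(P) supports the polar set C° at Q (i.e., C° ⊆ H(P) and Q ∈ C° ∩ ∂H(P)) if and only if the hemisphere H(Q) supports C at P (i.e., C ⊆ H(Q) and P ∈ C ∩ ∂H(Q)), provided C is spherically convex with C = (C°)°. -/
open scoped RealInnerProductSpace
open Real

/-- The hemisphere of `Sⁿ` centered at `P`. -/
def hemi {n : ℕ} (P : EuclideanSpace ℝ (Fin (n + 1))) :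
    Set (EuclideanSpace ℝ (Fin (n + 1))) :=
  {Q | ‖Q‖ = 1 ∧ 0 ≤ ⟪P, Q⟫}

/-- The spherical polar set `W°`. -/
def sPolar {n : ℕ} (W : Set (EuclideanSpace ℝ (Fin (n + 1)))) :
    Set (EuclideanSpace ℝ (Fin (n + 1))) :=
  {Q | ‖Q‖ = 1 ∧ ∀ P ∈ W, 0 ≤ ⟪P, Q⟫}

/-- Geodesic (spherical) convexity: closed under normalized nonnegative combinations. -/
def geodesicConvex {n : ℕ} (C : Set (EuclideanSpace ℝ (Fin (n + 1)))) : Prop :=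
  ∀ P ∈ C, ∀ Q ∈ C, ∀ a b : ℝ, 0 ≤ a → 0 ≤ b → 0 < a + b →
    a • P + b • Q ≠ 0 → ‖a • P + b • Q‖⁻¹ • (a • P + b • Q) ∈ C

/-- `H(P)` supports the set `K` at `Q`: `K ⊆ H(P)`, `Q ∈ K` and `P·Q = 0`. -/
def supports {n : ℕ} (P : EuclideanSpace ℝ (Fin (n + 1)))
    (K : Set (EuclideanSpace ℝ (Fin (n + 1)))) (Q : EuclideanSpace ℝ (Fin (n + 1))) : Prop :=
  K ⊆ hemi P ∧ Q ∈ K ∧ ⟪P, Q⟫ = 0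

/-- for a spherically convex `C ⊆ Sⁿ` with `C = (C°)°`, the hemisphere
`H(P)` supports `C°` at `Q` iff the hemisphere `H(Q)` supports `C` at `P`. -/
theorem stmt5 {n : ℕ} (C : Set (EuclideanSpace ℝ (Fin (n + 1))))
    (P Q : EuclideanSpace ℝ (Fin (n + 1))) (hP : ‖P‖ = 1) (hQ : ‖Q‖ = 1)
    (hCs : ∀ R ∈ C, ‖R‖ = 1) (hCc : geodesicConvex C)
    (hdual : C = sPolar (sPolar C)) :
    supports P (sPolar C) Q ↔ supports Q C P := by
  constructor
  · rintro ⟨hsub, hQmem, hPQ⟩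
    refine ⟨fun R hR => ⟨hCs R hR, by rw [real_inner_comm]; exact hQmem.2 R hR⟩, ?_, by rw [real_inner_comm]; exact hPQ⟩
    rw [hdual]
    exact ⟨hP, fun R hR => by rw [real_inner_comm]; exact (hsub hR).2⟩
  · rintro ⟨hsub, hPmem, hQP⟩
    refine ⟨fun R hR => ⟨hR.1, hR.2 P hPmem⟩, ⟨hQ, fun R hR => by
      rw [real_inner_comm]; exact (hsub hR).2⟩, by rw [real_inner_comm]; exact hQP⟩
end

section
/- Let P1, P2 ∈ S² with P1 · P2 = 0, and let R ∈ ∂H(P1) ∩ ∂H(P2) (so R·P1 = R·P2 = 0). If Q1, Q2 are points of the spherical triangle with vertices P1, P2, R such that Q1·Q2 = 0, then {Q1, Q2} must include at least one vertex of the triangle. -/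
open scoped RealInnerProductSpace
open Real

set_option maxHeartbeats 1000000

/-- The spherical triangle with vertices `A, B, Cv`: unit vectors expressible as
normalized nonnegative combinations of the vertices. -/
def sTriangle (A B Cv : EuclideanSpace ℝ (Fin 3)) : Set (EuclideanSpace ℝ (Fin 3)) :=
  {X | ∃ a b c : ℝ, 0 ≤ a ∧ 0 ≤ b ∧ 0 ≤ c ∧ a • A + b • B + c • Cv ≠ 0 ∧
    X = ‖a • A + b • B + c • Cv‖⁻¹ • (a • A + b • B + c • Cv)}

private lemma norm_pos_smul (t : ℝ) (ht : 0 < t) (X : EuclideanSpace ℝ (Fin 3))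
    (hX : ‖X‖ = 1) : ‖t • X‖⁻¹ • (t • X) = X := by
  rw [norm_smul, hX, Real.norm_eq_abs, abs_of_pos ht, mul_one, smul_smul,
    inv_mul_cancel₀ ht.ne', one_smul]

/-- let `P1, P2 ∈ S²` with `P1·P2 = 0` and let `R` satisfy
`R·P1 = R·P2 = 0` (so `R ∈ ∂H(P1) ∩ ∂H(P2)`). If `Q1, Q2` lie in the spherical
triangle with vertices `P1, P2, R` and `Q1·Q2 = 0`, then one of `Q1, Q2` is a vertex. -/
theorem stmt11 (P1 P2 R : EuclideanSpace ℝ (Fin 3))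
    (hP1 : ‖P1‖ = 1) (hP2 : ‖P2‖ = 1) (hR : ‖R‖ = 1)
    (h12 : ⟪P1, P2⟫ = 0) (hR1 : ⟪R, P1⟫ = 0) (hR2 : ⟪R, P2⟫ = 0)
    (Q1 Q2 : EuclideanSpace ℝ (Fin 3))
    (hQ1 : Q1 ∈ sTriangle P1 P2 R) (hQ2 : Q2 ∈ sTriangle P1 P2 R)
    (horth : ⟪Q1, Q2⟫ = 0) :
    Q1 = P1 ∨ Q1 = P2 ∨ Q1 = R ∨ Q2 = P1 ∨ Q2 = P2 ∨ Q2 = R := by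
  obtain ⟨a, b, c, ha, hb, hc, hv, hQ1e⟩ := hQ1
  obtain ⟨a', b', c', ha', hb', hc', hw, hQ2e⟩ := hQ2
  set v := a • P1 + b • P2 + c • R with hvdef
  set w := a' • P1 + b' • P2 + c' • R with hwdef
  have h11 : ⟪P1, P1⟫ = 1 := by
    rw [real_inner_self_eq_norm_sq, hP1]; norm_num
  have h22 : ⟪P2, P2⟫ = 1 := by
    rw [real_inner_self_eq_norm_sq, hP2]; norm_num
  have hRR : ⟪R, R⟫ = 1 := by
    rw [real_inner_self_eq_norm_sq, hR]; norm_num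
  have h21 : ⟪P2, P1⟫ = 0 := by rw [real_inner_comm]; exact h12
  have h1R : ⟪P1, R⟫ = 0 := by rw [real_inner_comm]; exact hR1
  have h2R : ⟪P2, R⟫ = 0 := by rw [real_inner_comm]; exact hR2
  have hvw : ⟪v, w⟫ = a * a' + b * b' + c * c' := by
    simp only [hvdef, hwdef, inner_add_left, inner_add_right, real_inner_smul_left,
      real_inner_smul_right, h11, h22, hRR, h12, h21, h1R, h2R, hR1, hR2]
    ring
  have hnv : ‖v‖ ≠ 0 := norm_ne_zero_iff.mpr hv
  have hnw : ‖w‖ ≠ 0 := norm_ne_zero_iff.mpr hw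
  have hsum : a * a' + b * b' + c * c' = 0 := by
    rw [← hvw]
    have := horth
    rw [hQ1e, hQ2e, real_inner_smul_left, real_inner_smul_right] at this
    rcases mul_eq_zero.mp this with h | h
    · exact absurd h (inv_ne_zero hnv)
    rcases mul_eq_zero.mp h with h | h
    · exact absurd h (inv_ne_zero hnw)
    · exact h
  have haa : a * a' = 0 := by linarith [mul_nonneg ha ha', mul_nonneg hb hb', mul_nonneg hc hc']
  have hbb : b * b' = 0 := by linarith [mul_nonneg ha ha', mul_nonneg hb hb', mul_nonneg hc hc']
  have hcc : c * c' = 0 := by linarith [mul_nonneg ha ha', mul_nonneg hb hb', mul_nonneg hc hc']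
  -- helper to conclude Q2 is a vertex when two of Q1's coords are positive
  rcases eq_or_lt_of_le ha with ha0 | hap
  · rcases eq_or_lt_of_le hb with hb0 | hbp
    · -- a = 0, b = 0, so c > 0, Q1 = R
      have hcp : 0 < c := by
        rcases eq_or_lt_of_le hc with hc0 | h; · exfalso; apply hv; simp [hvdef, ← ha0, ← hb0, ← hc0]
        · exact h
      right; right; left
      rw [hQ1e]
      have : v = c • R := by simp [hvdef, ← ha0, ← hb0]
      rw [this]; exact norm_pos_smul c hcp R hR
    · rcases eq_or_lt_of_le hc with hc0 | hcp
      · -- a = 0, c = 0, b > 0: Q1 = P2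
        right; left
        rw [hQ1e]
        have : v = b • P2 := by simp [hvdef, ← ha0, ← hc0]
        rw [this]; exact norm_pos_smul b hbp P2 hP2
      · -- b > 0 and c > 0: b' = 0, c' = 0, so Q2 = P1
        have hb'0 : b' = 0 := by rcases mul_eq_zero.mp hbb with h | h; · exact absurd h hbp.ne'
                                 exact h
        have hc'0 : c' = 0 := by rcases mul_eq_zero.mp hcc with h | h; · exact absurd h hcp.ne'
                                 exact h
        have ha'p : 0 < a' := by
          rcases eq_or_lt_of_le ha' with h0 | h; · exfalso; apply hw; simp [hwdef, ← h0, hb'0, hc'0]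
          · exact h
        right; right; right; left
        rw [hQ2e]
        have : w = a' • P1 := by simp [hwdef, hb'0, hc'0]
        rw [this]; exact norm_pos_smul a' ha'p P1 hP1
  · have ha'0 : a' = 0 := by rcases mul_eq_zero.mp haa with h | h; · exact absurd h hap.ne'
                             exact h
    rcases eq_or_lt_of_le hb with hb0 | hbp
    · rcases eq_or_lt_of_le hc with hc0 | hcp
      · -- b = 0, c = 0, a > 0: Q1 = P1
        left
        rw [hQ1e]
        have : v = a • P1 := by simp [hvdef, ← hb0, ← hc0]
        rw [this]; exact norm_pos_smul a hap P1 hP1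
      · -- a > 0 and c > 0: a' = 0, c' = 0, Q2 = P2
        have hc'0 : c' = 0 := by rcases mul_eq_zero.mp hcc with h | h; · exact absurd h hcp.ne'
                                 exact h
        have hb'p : 0 < b' := by
          rcases eq_or_lt_of_le hb' with h0 | h; · exfalso; apply hw; simp [hwdef, ha'0, ← h0, hc'0]
          · exact h
        right; right; right; right; left
        rw [hQ2e]
        have : w = b' • P2 := by simp [hwdef, ha'0, hc'0]
        rw [this]; exact norm_pos_smul b' hb'p P2 hP2
    · -- a > 0 and b > 0: a' = 0, b' = 0, Q2 = R
      have hb'0 : b' = 0 := by rcases mul_eq_zero.mp hbb with h | h; · exact absurd h hbp.ne'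
                               exact h
      have hc'p : 0 < c' := by
        rcases eq_or_lt_of_le hc' with h0 | h; · exfalso; apply hw; simp [hwdef, ha'0, hb'0, ← h0]
        · exact h
      right; right; right; right; right
      rw [hQ2e]
      have : w = c' • R := by simp [hwdef, ha'0, hb'0]
      rw [this]; exact norm_pos_smul c' hc'p R hR
end
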